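/- (f-Divergence upper bound.) Let f:(0,∞)→ℝ be a convex function with f(1)=0 that is strictly convex at 1 and differentiable at 1, such that f(0)=lim_{t→0⁺}f(t) is finite and the difference quotient g:(0,∞)→ℝ, g(x)=(f(x)−f(0))/x, is concave. Then for any two pmfs R, P on 𝒳 with P(x)>0 for all x, D_f(R||P) ≤ (f'(1) + f(0)) · χ²(R||P). -/

import Mathlib

/-! Since `f t = f 0 + t g(t)` and the concave `g` lies below its tangent line at `1`, whose
slope is `f'(1) + f(0)`, one gets `f t ≤ f'(1) (t - 1) + (f'(1) + f(0)) (t - 1)²` for all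
`t ≥ 0`. Evaluating at `t = R(x)/P(x)`, multiplying by `P(x)` and summing, the linear term
vanishes because `R` and `P` have the same total mass, and the quadratic term is the
χ²-divergence. -/

/-- A probability mass function on a finite set. -/
def IsPmf {𝒳 : Type*} [Fintype 𝒳] (P : 𝒳 → ℝ) : Prop :=
  (∀ x, 0 ≤ P x) ∧ ∑ x, P x = 1

/-- `f` is strictly convex at `1`: whenever a nontrivial convex combination of points of
`(0,∞)` equals `1`, the corresponding combination of values lies strictly above `f 1`. -/
def StrictlyConvexAtOne (f : ℝ → ℝ) : Prop :=
  ∀ x y : ℝ, 0 < x → 0 < y → x ≠ y → ∀ l : ℝ, 0 < l → l < 1 →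
    l * x + (1 - l) * y = 1 → f 1 < l * f x + (1 - l) * f y

/-- f-divergence `D_f(R‖P) = ∑ₓ P(x) f(R(x)/P(x))` (here `P > 0`, so no conventions
beyond the value `f 0` are needed). -/
noncomputable def fDiv {𝒳 : Type*} [Fintype 𝒳] (f : ℝ → ℝ) (R P : 𝒳 → ℝ) : ℝ :=
  ∑ x, P x * f (R x / P x)

/-- χ²-divergence `χ²(R‖P) = ∑ₓ (R(x) − P(x))²/P(x)`. -/
noncomputable def chiSq {𝒳 : Type*} [Fintype 𝒳] (R P : 𝒳 → ℝ) : ℝ :=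
  ∑ x, (R x - P x) ^ 2 / P x

open Finset Set

lemma ConcaveOn.le_add_mul_sub_of_hasDerivAt {S : Set ℝ} {f : ℝ → ℝ} {f' x y : ℝ}
    (hfc : ConcaveOn ℝ S f) (hx : x ∈ S) (hy : y ∈ S) (hf' : HasDerivAt f f' x) :
    f y ≤ f x + f' * (y - x) := by
  rcases lt_trichotomy y x with hyx | rfl | hxy
  · have hslope := hfc.le_slope_of_hasDerivAt hy hx hyx hf'
    rw [slope_def_field, le_div_iff₀ (sub_pos.2 hyx)] at hslope
    linarith
  · simp
  · have hslope := hfc.slope_le_of_hasDerivAt hx hy hxy hf'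
    rw [slope_def_field, div_le_iff₀ (sub_pos.2 hxy)] at hslope
    linarith

lemma hasDerivAt_sub_div_at_one {f : ℝ → ℝ} {f' : ℝ} (hf : HasDerivAt f f' 1) :
    HasDerivAt (fun x => (f x - f 0) / x) (f' - (f 1 - f 0)) 1 :=
  ((hf.sub_const (f 0)).div (hasDerivAt_id' 1) one_ne_zero).congr_deriv (by ring)

lemma le_quadratic_of_concaveOn_sub_div {f : ℝ → ℝ} {f' t : ℝ} (hf1 : f 1 = 0)
    (hf : HasDerivAt f f' 1) (hconc : ConcaveOn ℝ (Ioi 0) (fun x => (f x - f 0) / x))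
    (ht : 0 ≤ t) :
    f t ≤ f' * (t - 1) + (f' + f 0) * (t - 1) ^ 2 := by
  rcases ht.eq_or_lt with rfl | ht
  · linarith
  have htangent := hconc.le_add_mul_sub_of_hasDerivAt (y := t) (mem_Ioi.2 one_pos) ht
    (hasDerivAt_sub_div_at_one hf)
  have hft : f t = f 0 + t * ((f t - f 0) / t) := by field_simp; ring
  rw [hft]
  nlinarith [mul_le_mul_of_nonneg_left htangent ht.le]

lemma fDiv_le_mul_chiSq_of_le_quadratic {𝒳 : Type*} [Fintype 𝒳] {f : ℝ → ℝ} {b c : ℝ}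
    (hf : ∀ t, 0 ≤ t → f t ≤ b * (t - 1) + c * (t - 1) ^ 2) {R P : 𝒳 → ℝ}
    (hR : ∀ x, 0 ≤ R x) (hP : ∀ x, 0 < P x) (hmass : ∑ x, R x = ∑ x, P x) :
    fDiv f R P ≤ c * chiSq R P := by
  have hterm : ∀ x, P x * f (R x / P x) ≤ b * (R x - P x) + c * ((R x - P x) ^ 2 / P x) := by
    intro x
    have hPx := hP x
    calc P x * f (R x / P x)
        ≤ P x * (b * (R x / P x - 1) + c * (R x / P x - 1) ^ 2) :=
          mul_le_mul_of_nonneg_left (hf _ (div_nonneg (hR x) hPx.le)) hPx.le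
      _ = b * (R x - P x) + c * ((R x - P x) ^ 2 / P x) := by field_simp
  calc fDiv f R P ≤ ∑ x, (b * (R x - P x) + c * ((R x - P x) ^ 2 / P x)) :=
        sum_le_sum fun x _ => hterm x
    _ = b * (∑ x, R x - ∑ x, P x) + c * chiSq R P := by
        rw [sum_add_distrib, ← mul_sum, ← mul_sum, sum_sub_distrib, chiSq]
    _ = c * chiSq R P := by rw [hmass]; ring

theorem f_divergence_upper_bound_general
    {𝒳 : Type*} [Fintype 𝒳]
    (f : ℝ → ℝ)
    (hf1 : f 1 = 0)
    (hdiff : DifferentiableAt ℝ f 1)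
    (hconc : ConcaveOn ℝ (Set.Ioi (0 : ℝ)) (fun x => (f x - f 0) / x))
    (R P : 𝒳 → ℝ) (hR : IsPmf R) (hP : IsPmf P) (hPpos : ∀ x, 0 < P x) :
    fDiv f R P ≤ (deriv f 1 + f 0) * chiSq R P :=
  fDiv_le_mul_chiSq_of_le_quadratic
    (fun _ ht => le_quadratic_of_concaveOn_sub_div hf1 hdiff.hasDerivAt hconc ht)
    hR.1 hPpos (hR.2.trans hP.2.symm)

/-- **Lemma 7 (f-Divergence Upper Bound).**
If `f` is convex on `(0,∞)`, strictly convex at `1`, differentiable at `1`, `f(1) = 0`,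
`f(0) = lim_{t→0⁺} f(t)` is finite, and the difference quotient `g(x) = (f(x)−f(0))/x`
is concave, then `D_f(R‖P) ≤ (f'(1) + f(0)) χ²(R‖P)`. -/
theorem f_divergence_upper_bound
    {𝒳 : Type*} [Fintype 𝒳] (hcard : 2 ≤ Fintype.card 𝒳)
    (f : ℝ → ℝ)
    (hconv : ConvexOn ℝ (Set.Ioi (0 : ℝ)) f)
    (hstrict : StrictlyConvexAtOne f)
    (hf1 : f 1 = 0)
    (hdiff : DifferentiableAt ℝ f 1)
    (hf0 : Filter.Tendsto f (nhdsWithin 0 (Set.Ioi (0 : ℝ))) (nhds (f 0)))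
    (hconc : ConcaveOn ℝ (Set.Ioi (0 : ℝ)) (fun x => (f x - f 0) / x))
    (R P : 𝒳 → ℝ) (hR : IsPmf R) (hP : IsPmf P) (hPpos : ∀ x, 0 < P x) :
    fDiv f R P ≤ (deriv f 1 + f 0) * chiSq R P :=
  f_divergence_upper_bound_general f hf1 hdiff hconc R P hR hP hPpos
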